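/- arXiv:2404.03372 — 8 statements merged into one kernel-verified Lean document; each statement's English description precedes it below -/
import Mathlib

section
/- If f and g are monotonically increasing real-valued functions, then for any real-valued random variable X on a finite probability space, Cov(f(X), g(X)) ≥ 0. -/
/-- Chebyshev's association inequality: for monotone `f, g`, Cov(f(X), g(X)) ≥ 0. -/
theorem covariance_nonneg_of_monotone {α : Type*} [Fintype α] (p : α → ℝ)
    (hp : ∀ a, 0 ≤ p a) (hsum : ∑ a, p a = 1) (X : α → ℝ)
    (f g : ℝ → ℝ) (hf : Monotone f) (hg : Monotone g) :
    0 ≤ (∑ a, p a * (f (X a) * g (X a)))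
        - (∑ a, p a * f (X a)) * (∑ a, p a * g (X a)) := by
  have key : 0 ≤ ∑ a, ∑ b, p a * p b *
      ((f (X a) - f (X b)) * (g (X a) - g (X b))) := by
    apply Finset.sum_nonneg; intro a _
    apply Finset.sum_nonneg; intro b _
    apply mul_nonneg (mul_nonneg (hp a) (hp b))
    rcases le_total (X a) (X b) with h | h
    · exact mul_nonneg_iff.mpr (Or.inr ⟨by linarith [hf h], by linarith [hg h]⟩)
    · exact mul_nonneg (by linarith [hf h]) (by linarith [hg h])
  have expand : ∑ a, ∑ b, p a * p b *
      ((f (X a) - f (X b)) * (g (X a) - g (X b)))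
      = 2 * ((∑ a, p a * (f (X a) * g (X a)))
        - (∑ a, p a * f (X a)) * (∑ a, p a * g (X a))) := by
    have : ∀ a, ∑ b, p a * p b * ((f (X a) - f (X b)) * (g (X a) - g (X b)))
        = p a * (f (X a) * g (X a)) * (∑ b, p b)
          - p a * f (X a) * (∑ b, p b * g (X b))
          - p a * g (X a) * (∑ b, p b * f (X b))
          + p a * (∑ b, p b * (f (X b) * g (X b))) := by
      intro a
      rw [Finset.mul_sum, Finset.mul_sum, Finset.mul_sum, Finset.mul_sum,
        ← Finset.sum_sub_distrib, ← Finset.sum_sub_distrib, ← Finset.sum_add_distrib]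
      exact Finset.sum_congr rfl fun b _ => by ring
    rw [Finset.sum_congr rfl fun a _ => this a]
    simp only [Finset.sum_add_distrib, Finset.sum_sub_distrib, ← Finset.sum_mul,
      ← Finset.mul_sum, hsum]
    ring
  linarith [expand ▸ key]
end

section
/- Let (L_k) be a nonincreasing sequence of positive reals converging to 0 and satisfying L_k − L_{k+1} ≤ c · L_k² for all k, with c > 0. Then for every σ ∈ (0,1) there exists T such that for all k ≥ T, L_k ≥ (1 − σ)/(2·c·k). -/
/-- Sublinear lower bound: a positive nonincreasing sequence tending to 0 with
`L k - L (k+1) ≤ c L k ^ 2` satisfies `L k ≥ (1 - σ) / (2 c k)` eventually. -/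
theorem sublinear_lower_bound (L : ℕ → ℝ) (c : ℝ) (hc : 0 < c)
    (hpos : ∀ k, 0 < L k) (hmono : ∀ k, L (k + 1) ≤ L k)
    (hlim : Filter.Tendsto L Filter.atTop (nhds 0))
    (hdec : ∀ k, L k - L (k + 1) ≤ c * (L k) ^ 2) :
    ∀ σ : ℝ, 0 < σ → σ < 1 →
      ∃ T : ℕ, ∀ k : ℕ, T ≤ k → L k ≥ (1 - σ) / (2 * c * k) := by
  intro σ hσ0 hσ1
  have hσ2 : (0:ℝ) < 1 - σ/2 := by linarith
  have hσ1' : (0:ℝ) < 1 - σ := by linarith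
  set δ : ℝ := σ / (2*c) with hδdef
  have hδ : 0 < δ := by positivity
  obtain ⟨N, hN⟩ : ∃ N, ∀ k ≥ N, L k < δ := by
    have h := hlim.eventually (gt_mem_nhds hδ)
    exact Filter.eventually_atTop.mp h
  set M : ℝ := c / (1 - σ/2) with hMdef
  have hM : 0 < M := by positivity
  -- key step
  have step : ∀ k, N ≤ k → 1 / L (k+1) ≤ 1 / L k + M := by
    intro k hk
    have h1 : 0 < L (k+1) := hpos _
    have h2 : 0 < L k := hpos _
    have hcL : c * L k ≤ σ / 2 := by
      have := (hN k hk).le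
      rw [hδdef] at this
      calc c * L k ≤ c * (σ / (2*c)) := by nlinarith
        _ = σ / 2 := by field_simp
    have hA : L k * (1 - σ/2) ≤ L (k+1) := by nlinarith [hdec k]
    rw [hMdef, div_add_div _ _ h2.ne' hσ2.ne', div_le_div_iff₀ h1 (mul_pos h2 hσ2)]
    nlinarith [mul_le_mul_of_nonneg_left hA (mul_nonneg hc.le h2.le),
      mul_le_mul_of_nonneg_right (hdec k) hσ2.le]
  have ind : ∀ n, 1 / L (N + n) ≤ 1 / L N + M * n := by
    intro n
    induction n with
    | zero => simp
    | succ n ih =>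
      have := step (N + n) (Nat.le_add_right _ _)
      push_cast
      calc 1 / L (N + (n+1)) = 1 / L ((N + n) + 1) := by ring_nf
        _ ≤ 1 / L (N + n) + M := this
        _ ≤ 1 / L N + M * n + M := by linarith
        _ = 1 / L N + M * (n + 1) := by ring
  set g : ℝ := 2*c/(1-σ) - M with hgdef
  have hg : 0 < g := by
    rw [hgdef, hMdef, sub_pos, div_lt_div_iff₀ hσ2 hσ1']
    nlinarith
  refine ⟨max (N+1) (Nat.ceil ((1/L N)/g)), fun k hk => ?_⟩
  have hkN : N ≤ k := le_trans (by omega) (le_trans (le_max_left _ _) hk)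
  have hk1 : (1:ℝ) ≤ k := by
    have : 1 ≤ k := le_trans (by omega) (le_trans (le_max_left _ _) hk)
    exact_mod_cast this
  have h1 : 1 / L k ≤ 1 / L N + M * ((k - N : ℕ) : ℝ) := by
    have := ind (k - N)
    rwa [Nat.add_sub_cancel' hkN] at this
  have hceil : (1/L N)/g ≤ (k:ℝ) := by
    have h := Nat.le_ceil ((1/L N)/g)
    have : (Nat.ceil ((1/L N)/g) : ℝ) ≤ (k:ℝ) := by
      exact_mod_cast le_trans (le_max_right (N+1) _) hk
    linarith
  have h2 : 1 / L N ≤ g * k := by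
    rw [div_le_iff₀ hg] at hceil
    linarith [hceil]
  have hcast : ((k - N : ℕ) : ℝ) ≤ (k : ℝ) := by
    exact_mod_cast Nat.sub_le k N
  have h3 : 1 / L k ≤ 2*c*k/(1-σ) := by
    have hMk : M * ((k - N : ℕ) : ℝ) ≤ M * k := by nlinarith
    have : 1 / L k ≤ g * k + M * k := by linarith
    rw [hgdef] at this
    calc 1 / L k ≤ (2*c/(1-σ) - M) * k + M * k := this
      _ = 2*c/(1-σ) * k := by ring
      _ = 2*c*k/(1-σ) := by ring
  have hLk := hpos k
  rw [ge_iff_le, div_le_iff₀ (by nlinarith : (0:ℝ) < 2*c*(k:ℝ))]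
  rw [div_le_div_iff₀ hLk hσ1'] at h3
  nlinarith
end

section
/- With α, p, A, Â, η, Z, p' as in the softmax policy gradient update (p'(a) ∝ p(a)·exp(η·Â(a)), Â(a) = p(a)A(a), Σ_a Â(a) = 0, |α| = n), one has Σ_a p'(a)·A(a) ≥ (1/n) · M · (1 − exp(−η·M)), where M = max_a |Â(a)|. -/
set_option maxHeartbeats 1000000

private lemma exp_term_nonneg (η x : ℝ) (hη : 0 < η) :
    0 ≤ x * (Real.exp (η * x) - 1) := by
  rcases le_or_gt 0 x with hx | hx
  · have h1 : (1:ℝ) ≤ Real.exp (η * x) := by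
      rw [show (1:ℝ) = Real.exp 0 by simp]
      exact Real.exp_le_exp.mpr (by positivity)
    nlinarith
  · have h1 : Real.exp (η * x) ≤ 1 := by
      rw [show (1:ℝ) = Real.exp 0 by simp]
      exact Real.exp_le_exp.mpr (by nlinarith)
    nlinarith

private lemma softmaxPG_key {α : Type*} [Fintype α] [Nonempty α]
    (p : α → ℝ) (hp : ∀ a, 0 < p a) (hsum : ∑ a, p a = 1)
    (A : α → ℝ) (hA : ∑ a, p a * A a = 0) (η : ℝ) (hη : 0 < η)
    (Ahat : α → ℝ) (hAhat : ∀ a, Ahat a = p a * A a)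
    (M : ℝ) (hM : M = Finset.univ.sup' Finset.univ_nonempty (fun a => |Ahat a|))
    (Z : ℝ) (hZ : Z = ∑ a, p a * Real.exp (η * Ahat a))
    (p' : α → ℝ) (hp' : ∀ a, p' a = p a * Real.exp (η * Ahat a) / Z) :
    ∑ a, p' a * A a ≥
      (1 / (Fintype.card α : ℝ)) * M * (1 - Real.exp (-(η * M))) := by
  classical
  set n : ℝ := (Fintype.card α : ℝ) with hn
  have hcard : (1:ℝ) ≤ n := by
    rw [hn]
    exact_mod_cast Nat.one_le_cast.mpr Fintype.card_pos
  have hn0 : (0:ℝ) < n := lt_of_lt_of_le one_pos hcard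
  have hsumAhat : ∑ a, Ahat a = 0 := by
    rw [Finset.sum_congr rfl (fun a _ => hAhat a)]; exact hA
  set S : ℝ := ∑ a, Ahat a * (Real.exp (η * Ahat a) - 1) with hS
  have hSnonneg : 0 ≤ S :=
    Finset.sum_nonneg (fun a _ => exp_term_nonneg η _ hη)
  have hSalt : ∑ a, Ahat a * Real.exp (η * Ahat a) = S := by
    rw [hS]
    rw [Finset.sum_congr rfl (fun a _ => by ring_nf :
      ∀ a ∈ Finset.univ, Ahat a * (Real.exp (η * Ahat a) - 1)
        = Ahat a * Real.exp (η * Ahat a) - Ahat a)]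
    rw [Finset.sum_sub_distrib, hsumAhat, sub_zero]
  have hZpos : 0 < Z := by
    rw [hZ]
    exact Finset.sum_pos (fun a _ => mul_pos (hp a) (Real.exp_pos _))
      Finset.univ_nonempty
  have hLHS : ∑ a, p' a * A a = S / Z := by
    rw [← hSalt, Finset.sum_div]
    refine Finset.sum_congr rfl (fun a _ => ?_)
    rw [hp' a, hAhat a]; ring
  rw [hLHS, ge_iff_le]
  obtain ⟨a₁, -, ha₁⟩ := Finset.exists_mem_eq_sup' (Finset.univ_nonempty (α := α))
    (fun a => |Ahat a|)
  have hMa₁ : |Ahat a₁| = M := by rw [hM, ha₁]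
  have hMabs : ∀ a, |Ahat a| ≤ M := fun a =>
    hM ▸ Finset.le_sup' (fun a => |Ahat a|) (Finset.mem_univ a)
  have hMnonneg : 0 ≤ M := hMa₁ ▸ abs_nonneg _
  set m : ℝ := Finset.univ.sup' Finset.univ_nonempty Ahat with hm
  obtain ⟨a₂, -, ha₂⟩ := Finset.exists_mem_eq_sup' (Finset.univ_nonempty (α := α)) Ahat
  have ha₂' : Ahat a₂ = m := by rw [hm, ha₂]
  have hle_m : ∀ a, Ahat a ≤ m := fun a => Finset.le_sup' Ahat (Finset.mem_univ a)
  have hm_nonneg : 0 ≤ m := by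
    by_contra h
    push_neg at h
    have hneg : ∑ a, Ahat a < 0 :=
      Finset.sum_neg (fun a _ => lt_of_le_of_lt (hle_m a) h) Finset.univ_nonempty
    linarith [hsumAhat]
  have hmM : m ≤ M := ha₂' ▸ le_trans (le_abs_self _) (hMabs a₂)
  have hexp1 : (1:ℝ) ≤ Real.exp (η * m) := by
    rw [show (1:ℝ) = Real.exp 0 by simp]
    exact Real.exp_le_exp.mpr (by positivity)
  have hZle : Z ≤ Real.exp (η * m) := by
    rw [hZ]
    calc ∑ a, p a * Real.exp (η * Ahat a)
        ≤ ∑ a, p a * Real.exp (η * m) :=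
          Finset.sum_le_sum (fun a _ => mul_le_mul_of_nonneg_left
            (Real.exp_le_exp.mpr (mul_le_mul_of_nonneg_left (hle_m a) hη.le)) (hp a).le)
      _ = Real.exp (η * m) := by rw [← Finset.sum_mul, hsum, one_mul]
  have hE1 : Real.exp (-(η * M)) ≤ 1 := by
    rw [show (1:ℝ) = Real.exp 0 by simp]
    exact Real.exp_le_exp.mpr (by nlinarith)
  have hEpos : 0 < Real.exp (-(η * M)) := Real.exp_pos _
  -- core inequality
  have hcore : M * (1 - Real.exp (-(η * M))) * Real.exp (η * m) ≤ n * S := by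
    rcases eq_or_lt_of_le hMnonneg with hM0 | hMpos
    · rw [← hM0]
      nlinarith [hSnonneg, hn0]
    · rcases (abs_eq hMnonneg).mp hMa₁ with h₁ | h₁
      · -- Ahat a₁ = M, so m = M
        have hmM' : m = M := le_antisymm hmM (by rw [← h₁]; exact hle_m a₁)
        have hterm : M * (Real.exp (η * M) - 1) ≤ S := by
          rw [← h₁]
          exact Finset.single_le_sum
            (f := fun a => Ahat a * (Real.exp (η * Ahat a) - 1))
            (fun a _ => exp_term_nonneg η _ hη) (Finset.mem_univ a₁)
        have hEE : M * (Real.exp (-(η * M)) * Real.exp (η * M)) = M := by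
          rw [← Real.exp_add]; simp
        have hnS : S ≤ n * S := by nlinarith [hSnonneg, hcard]
        rw [hmM']
        nlinarith [hterm, hEE, hnS]
      · -- Ahat a₁ = -M
        have hne : a₁ ≠ a₂ := by
          intro h
          rw [h, ha₂'] at h₁
          linarith
        have hpair : Ahat a₁ * (Real.exp (η * Ahat a₁) - 1)
            + Ahat a₂ * (Real.exp (η * Ahat a₂) - 1) ≤ S := by
          have hsub : ({a₁, a₂} : Finset α) ⊆ Finset.univ := Finset.subset_univ _
          have := Finset.sum_le_sum_of_subset_of_nonneg hsub
            (fun a _ _ => exp_term_nonneg η (Ahat a) hη)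
          rwa [Finset.sum_pair hne] at this
        have hnm : M ≤ n * m := by
          have hsplit : Ahat a₁ + ∑ a ∈ Finset.univ.erase a₁, Ahat a = 0 := by
            rw [Finset.add_sum_erase _ _ (Finset.mem_univ a₁)]
            exact hsumAhat
          have hbound : ∑ a ∈ Finset.univ.erase a₁, Ahat a
              ≤ ((Finset.univ.erase a₁).card : ℝ) * m := by
            calc ∑ a ∈ Finset.univ.erase a₁, Ahat a
                ≤ ∑ _a ∈ Finset.univ.erase a₁, m :=
                  Finset.sum_le_sum (fun a _ => hle_m a)
              _ = ((Finset.univ.erase a₁).card : ℝ) * m := by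
                  rw [Finset.sum_const, nsmul_eq_mul]
          have hcle : ((Finset.univ.erase a₁).card : ℝ) ≤ n := by
            rw [hn]
            exact_mod_cast Finset.card_le_card (Finset.subset_univ _)
          have hMsum : M = ∑ a ∈ Finset.univ.erase a₁, Ahat a := by
            rw [h₁] at hsplit; linarith
          nlinarith [hbound, hcle, hm_nonneg]
        rw [h₁, ha₂', show η * -M = -(η * M) by ring] at hpair
        -- hpair : -M * (exp (-(η*M)) - 1) + m * (exp (η*m) - 1) ≤ S
        set E : ℝ := Real.exp (-(η * M)) with hEdef
        set G : ℝ := Real.exp (η * m) with hGdef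
        have h4 : M * (1 - E) * (G - 1) ≤ M * (G - 1) := by
          nlinarith [mul_nonneg (mul_nonneg hMpos.le hEpos.le) (sub_nonneg.mpr hexp1)]
        have h5 : M * (G - 1) ≤ n * m * (G - 1) := by
          nlinarith [mul_nonneg (sub_nonneg.mpr hnm) (sub_nonneg.mpr hexp1)]
        have hfac : 0 ≤ M * (1 - E) := mul_nonneg hMpos.le (by linarith)
        have h6 : M * (1 - E) ≤ n * (M * (1 - E)) := by nlinarith [hcard, hfac]
        have h7 : n * (M * (1 - E) + m * (G - 1)) ≤ n * S := by
          have : M * (1 - E) + m * (G - 1) ≤ S := by nlinarith [hpair]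
          exact mul_le_mul_of_nonneg_left this hn0.le
        nlinarith [h4, h5, h6, h7]
  -- combine
  have hfac : 0 ≤ M * (1 - Real.exp (-(η * M))) :=
    mul_nonneg hMnonneg (by linarith)
  have h2 : M * (1 - Real.exp (-(η * M))) * Z ≤ n * S :=
    le_trans (mul_le_mul_of_nonneg_left hZle hfac) hcore
  rw [show (1 / n * M * (1 - Real.exp (-(η * M))) : ℝ)
      = (M * (1 - Real.exp (-(η * M)))) / n by ring, div_le_div_iff₀ hn0 hZpos]
  linarith [h2]

/-- Improvement lower bound for softmax policy gradient. -/
theorem softmaxPG_improvement_lower_bound {α : Type*} [Fintype α] [Nonempty α]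
    (p : α → ℝ) (hp : ∀ a, 0 < p a) (hsum : ∑ a, p a = 1)
    (A : α → ℝ) (hA : ∑ a, p a * A a = 0) (η : ℝ) (hη : 0 < η) :
    let Ahat : α → ℝ := fun a => p a * A a
    let M : ℝ := Finset.univ.sup' Finset.univ_nonempty (fun a => |Ahat a|)
    let Z : ℝ := ∑ a, p a * Real.exp (η * Ahat a)
    let p' : α → ℝ := fun a => p a * Real.exp (η * Ahat a) / Z
    ∑ a, p' a * A a ≥
      (1 / (Fintype.card α : ℝ)) * M * (1 - Real.exp (-(η * M))) := by
  intro Ahat M Z p'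
  exact softmaxPG_key p hp hsum A hA η hη Ahat (fun a => rfl) M rfl Z rfl p' (fun a => rfl)
end

section
/- With α, p, A, Â, η, Z, p' as in the softmax policy gradient update (p'(a) ∝ p(a)·exp(η·Â(a)), Â(a) = p(a)A(a), Σ_a Â(a) = 0, |α| = n), and assuming max_a |Â(a)| ≤ B, one has Σ_a p'(a)·A(a) ≤ (exp(2ηB) − 1)·(n/B)·(max_a |Â(a)|)². -/
lemma exp_chord {c x : ℝ} (hc : 0 < c) (hx0 : 0 ≤ x) (hxc : x ≤ c) :
    Real.exp x - 1 ≤ x / c * (Real.exp c - 1) := by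
  have h := convexOn_exp.2 (Set.mem_univ (0:ℝ)) (Set.mem_univ c)
    (show (0:ℝ) ≤ 1 - x / c by
      rw [sub_nonneg]; exact div_le_one_of_le₀ hxc hc.le)
    (show (0:ℝ) ≤ x / c from div_nonneg hx0 hc.le)
    (by ring)
  simp only [smul_eq_mul, mul_zero, zero_add, Real.exp_zero] at h
  have hx : x / c * c = x := div_mul_cancel₀ x hc.ne'
  rw [hx] at h
  nlinarith [h]

/-- Improvement upper bound for softmax policy gradient. -/
theorem softmaxPG_improvement_upper_bound {α : Type*} [Fintype α] [Nonempty α]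
    (p : α → ℝ) (hp : ∀ a, 0 < p a) (hsum : ∑ a, p a = 1)
    (A : α → ℝ) (hA : ∑ a, p a * A a = 0) (η B : ℝ) (hη : 0 < η) (hB : 0 < B)
    (hbound : Finset.univ.sup' Finset.univ_nonempty (fun a => |p a * A a|) ≤ B) :
    let Ahat : α → ℝ := fun a => p a * A a
    let M : ℝ := Finset.univ.sup' Finset.univ_nonempty (fun a => |Ahat a|)
    let Z : ℝ := ∑ a, p a * Real.exp (η * Ahat a)
    let p' : α → ℝ := fun a => p a * Real.exp (η * Ahat a) / Z
    ∑ a, p' a * A a ≤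
      (Real.exp (2 * η * B) - 1) * ((Fintype.card α : ℝ) / B) * M ^ 2 := by
  intro Ahat M Z p'
  have hM : ∀ a, |Ahat a| ≤ M := fun a =>
    Finset.le_sup' (fun a => |Ahat a|) (Finset.mem_univ a)
  have hM0 : 0 ≤ M := le_trans (abs_nonneg _) (hM (Classical.arbitrary α))
  have hMB : M ≤ B := hbound
  have hexpB1 : 1 ≤ Real.exp (η * B) :=
    Real.one_le_exp (by positivity)
  -- Z bounds
  have hZpos : 0 < Z := Finset.sum_pos
    (fun a _ => mul_pos (hp a) (Real.exp_pos _)) Finset.univ_nonempty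
  have hZlb : Real.exp (-(η * B)) ≤ Z := by
    calc Real.exp (-(η * B)) = ∑ a, p a * Real.exp (-(η * B)) := by
          rw [← Finset.sum_mul, hsum, one_mul]
      _ ≤ Z := Finset.sum_le_sum (fun a _ => by
          have h1 : -(η * B) ≤ η * Ahat a := by
            have := (abs_le.mp (le_trans (hM a) hMB)).1
            nlinarith
          exact mul_le_mul_of_nonneg_left (Real.exp_le_exp.mpr h1) (hp a).le)
  set S : ℝ := ∑ a, Ahat a * (Real.exp (η * Ahat a) - 1) with hS
  -- rewrite the LHS
  have hkey : ∑ a, p' a * A a = S / Z := by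
    have h1 : ∑ a, p' a * A a = (∑ a, Ahat a * Real.exp (η * Ahat a)) / Z := by
      rw [Finset.sum_div]
      exact Finset.sum_congr rfl fun a _ => by
        show p a * Real.exp (η * Ahat a) / Z * A a = _
        ring
    have h2 : ∑ a, Ahat a * Real.exp (η * Ahat a)
        = S + ∑ a, Ahat a := by
      rw [hS, ← Finset.sum_add_distrib]
      exact Finset.sum_congr rfl fun a _ => by ring
    have h3 : ∑ a, Ahat a = 0 := hA
    rw [h1, h2, h3, add_zero]
  -- termwise bounds
  have htermpos : ∀ a, 0 ≤ Ahat a * (Real.exp (η * Ahat a) - 1) := by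
    intro a
    rcases le_or_gt 0 (Ahat a) with hx | hx
    · have : 1 ≤ Real.exp (η * Ahat a) := Real.one_le_exp (by positivity)
      nlinarith
    · have : Real.exp (η * Ahat a) ≤ 1 := Real.exp_le_one_iff.mpr (by nlinarith)
      nlinarith
  have hterm : ∀ a, Ahat a * (Real.exp (η * Ahat a) - 1)
      ≤ (Real.exp (η * B) - 1) * M ^ 2 / B := by
    intro a
    have hxM := abs_le.mp (hM a)
    have hx2 : Ahat a ^ 2 ≤ M ^ 2 := sq_le_sq' (by linarith [hxM.1]) hxM.2
    rcases le_or_gt 0 (Ahat a) with hx | hx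
    · have hch := exp_chord (mul_pos hη hB) (mul_nonneg hη.le hx)
        (by nlinarith [hxM.2])
      have hsimp : η * Ahat a / (η * B) = Ahat a / B := by
        rw [mul_div_mul_left _ _ hη.ne']
      rw [hsimp] at hch
      -- x * (exp(ηx) - 1) ≤ x * (x/B * (e^{ηB}-1)) = x²/B (e^{ηB}-1) ≤ M²/B (...)
      have h4 := mul_le_mul_of_nonneg_left hch hx
      have h5 : Ahat a * (Ahat a / B * (Real.exp (η * B) - 1)) * B
          = Ahat a ^ 2 * (Real.exp (η * B) - 1) := by
        field_simp
      rw [le_div_iff₀ hB]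
      nlinarith [mul_le_mul_of_nonneg_right h4 hB.le,
        mul_le_mul_of_nonneg_right hx2 (by linarith : (0:ℝ) ≤ Real.exp (η * B) - 1)]
    · have h1 : 1 - Real.exp (η * Ahat a) ≤ -(η * Ahat a) := by
        nlinarith [Real.add_one_le_exp (η * Ahat a)]
      have hexp1 : η * B + 1 ≤ Real.exp (η * B) := Real.add_one_le_exp _
      rw [le_div_iff₀ hB]
      -- x(e^{ηx}-1)B = (-x)(1-e^{ηx})B ≤ (-x)(-ηx)B = η x² B ≤ (e^{ηB}-1)M²
      nlinarith [mul_le_mul_of_nonneg_left h1 (neg_nonneg.mpr hx.le),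
        mul_pos hη hB, hx2, sq_nonneg (Ahat a)]
  have hS0 : 0 ≤ S := Finset.sum_nonneg fun a _ => htermpos a
  have hSbound : S ≤ (Fintype.card α : ℝ) * ((Real.exp (η * B) - 1) * M ^ 2 / B) := by
    have := Finset.sum_le_card_nsmul Finset.univ
      (fun a => Ahat a * (Real.exp (η * Ahat a) - 1))
      ((Real.exp (η * B) - 1) * M ^ 2 / B) (fun a _ => hterm a)
    simpa [nsmul_eq_mul, Finset.card_univ] using this
  have hdiv : S / Z ≤ S * Real.exp (η * B) := by
    rw [div_le_iff₀ hZpos]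
    calc S = S * (Real.exp (η * B) * Real.exp (-(η * B))) := by
          rw [← Real.exp_add]; simp
      _ = S * Real.exp (η * B) * Real.exp (-(η * B)) := by ring
      _ ≤ S * Real.exp (η * B) * Z :=
          mul_le_mul_of_nonneg_left hZlb (by positivity)
  rw [hkey]
  refine le_trans hdiv ?_
  have h2exp : Real.exp (2 * η * B) = Real.exp (η * B) * Real.exp (η * B) := by
    rw [← Real.exp_add]; ring_nf
  have hstep : S * Real.exp (η * B)
      ≤ (Fintype.card α : ℝ) * ((Real.exp (η * B) - 1) * M ^ 2 / B) * Real.exp (η * B) :=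
    mul_le_mul_of_nonneg_right hSbound (Real.exp_pos _).le
  refine le_trans hstep ?_
  rw [h2exp, ← sub_nonneg]
  have hid : (Real.exp (η * B) * Real.exp (η * B) - 1) * ((Fintype.card α : ℝ) / B) * M ^ 2
      - (Fintype.card α : ℝ) * ((Real.exp (η * B) - 1) * M ^ 2 / B) * Real.exp (η * B)
      = ((Fintype.card α : ℝ) * M ^ 2 / B) * (Real.exp (η * B) - 1) := by ring
  rw [hid]
  exact mul_nonneg (by positivity) (by linarith)
end

section
/- Let θ, θ' : α → ℝ be functions on a nonempty finite set α, and let π_θ, π_{θ'} be the corresponding softmax probability vectors, i.e. π_θ(a) = exp(θ(a)) / Σ_{a'} exp(θ(a')). Then for any constant c ∈ ℝ, the KL divergence satisfies KL(π_θ ‖ π_{θ'}) ≤ (1/2) · max_a |θ(a) − θ'(a) − c|². -/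
open Real Finset

/-- Hoeffding-type bound for the log-partition function. -/
lemma key_logsum {α : Type*} [Fintype α] [Nonempty α] (θ δ : α → ℝ) (M : ℝ)
    (hM : ∀ a, |δ a| ≤ M) :
    Real.log (∑ a, Real.exp (θ a - δ a)) - Real.log (∑ a, Real.exp (θ a))
      - (∑ a, Real.exp (θ a) * (-(δ a))) / (∑ a, Real.exp (θ a)) ≤ M ^ 2 / 2 := by
  have hM0 : 0 ≤ M := le_trans (abs_nonneg _) (hM (Classical.arbitrary α))
  set S : ℝ → ℝ := fun t => ∑ a, Real.exp (θ a - t * δ a) with hSdef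
  set S1 : ℝ → ℝ := fun t => ∑ a, Real.exp (θ a - t * δ a) * (-(δ a)) with hS1def
  set S2 : ℝ → ℝ := fun t => ∑ a, Real.exp (θ a - t * δ a) * (-(δ a)) * (-(δ a)) with hS2def
  have hSpos : ∀ t, 0 < S t := fun t =>
    Finset.sum_pos (fun a _ => Real.exp_pos _) Finset.univ_nonempty
  have hinner : ∀ (a : α) (t : ℝ), HasDerivAt (fun t => θ a - t * δ a) (-(δ a)) t := by
    intro a t
    simpa using (hasDerivAt_mul_const (δ a)).const_sub (θ a)
  have hS : ∀ t, HasDerivAt S (S1 t) t := by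
    intro t
    apply HasDerivAt.fun_sum
    intro a _
    exact ((hinner a t).exp)
  have hS1 : ∀ t, HasDerivAt S1 (S2 t) t := by
    intro t
    apply HasDerivAt.fun_sum
    intro a _
    exact ((hinner a t).exp).mul_const (-(δ a))
  -- the function φ = S1/S - t*M^2 is antitone
  have hφderiv : ∀ t, HasDerivAt (fun t => S1 t / S t - t * M ^ 2)
      ((S2 t * S t - S1 t * S1 t) / S t ^ 2 - M ^ 2) t := by
    intro t
    exact ((hS1 t).div (hS t) (hSpos t).ne').sub (hasDerivAt_mul_const (M ^ 2))
  have hS2le : ∀ t, S2 t ≤ M ^ 2 * S t := by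
    intro t
    rw [hS2def, hSdef, Finset.mul_sum]
    apply Finset.sum_le_sum
    intro a _
    have h1 : Real.exp (θ a - t * δ a) * (-(δ a)) * (-(δ a))
        = (δ a) ^ 2 * Real.exp (θ a - t * δ a) := by ring
    have h2 : (δ a) ^ 2 ≤ M ^ 2 := by
      have := sq_abs (δ a)
      nlinarith [hM a, abs_nonneg (δ a)]
    rw [h1]
    exact mul_le_mul_of_nonneg_right h2 (Real.exp_pos _).le |>.trans_eq (by ring)
  have hφanti : Antitone (fun t => S1 t / S t - t * M ^ 2) := by
    apply antitone_of_deriv_nonpos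
    · exact fun t => (hφderiv t).differentiableAt
    · intro t
      rw [(hφderiv t).deriv]
      have hS2' := hS2le t
      have hpos := hSpos t
      have : (S2 t * S t - S1 t * S1 t) / S t ^ 2 ≤ M ^ 2 := by
        rw [div_le_iff₀ (by positivity)]
        nlinarith [sq_nonneg (S1 t)]
      linarith
  -- the function Φ = log S - t * (S1 0 / S 0) - t^2 * (M^2/2) is antitone on [0,∞)
  have hΦderiv : ∀ t, HasDerivAt
      (fun t => Real.log (S t) - t * (S1 0 / S 0) - t ^ 2 * (M ^ 2 / 2))
      (S1 t / S t - S1 0 / S 0 - t * M ^ 2) t := by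
    intro t
    have h1 : HasDerivAt (fun t : ℝ => Real.log (S t)) (S1 t / S t) t :=
      (hS t).log (hSpos t).ne'
    have h2 : HasDerivAt (fun t : ℝ => t * (S1 0 / S 0)) (S1 0 / S 0) t :=
      hasDerivAt_mul_const _
    have h3 : HasDerivAt (fun t : ℝ => t ^ 2 * (M ^ 2 / 2)) (t * M ^ 2) t := by
      have := (hasDerivAt_pow 2 t).mul_const (M ^ 2 / 2)
      refine this.congr_deriv ?_
      push_cast
      ring
    exact (h1.sub h2).sub h3
  have hΦanti : AntitoneOn
      (fun t => Real.log (S t) - t * (S1 0 / S 0) - t ^ 2 * (M ^ 2 / 2)) (Set.Ici 0) := by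
    apply antitoneOn_of_deriv_nonpos (convex_Ici 0)
    · exact fun t _ => (hΦderiv t).continuousAt.continuousWithinAt
    · intro t ht
      exact (hΦderiv t).differentiableAt.differentiableWithinAt
    · intro t ht
      rw [(hΦderiv t).deriv]
      have ht0 : (0:ℝ) ≤ t := le_of_lt (by simpa using ht)
      have := hφanti ht0
      simp only [zero_mul, sub_zero] at this
      linarith
  have hkey := hΦanti (Set.self_mem_Ici) (Set.mem_Ici.mpr zero_le_one) zero_le_one
  simp only [one_mul, one_pow, zero_mul, sub_zero, pow_two, zero_pow, mul_zero] at hkey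
  have hS1eq : S 1 = ∑ a, Real.exp (θ a - δ a) := by
    simp [hSdef]
  have hS0eq : S 0 = ∑ a, Real.exp (θ a) := by
    simp [hSdef]
  have hS10eq : S1 0 = ∑ a, Real.exp (θ a) * (-(δ a)) := by
    simp [hS1def]
  rw [hS1eq, hS0eq, hS10eq] at hkey
  linarith [hkey]

/-- KL divergence between two softmax policies is bounded by
`(1/2) max_a |θ a - θ' a - c|²` for any constant `c`. -/
theorem KL_softmax_le {α : Type*} [Fintype α] [Nonempty α] (θ θ' : α → ℝ) (c : ℝ) :
    let πθ : α → ℝ := fun a => Real.exp (θ a) / ∑ a', Real.exp (θ a')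
    let πθ' : α → ℝ := fun a => Real.exp (θ' a) / ∑ a', Real.exp (θ' a')
    ∑ a, πθ a * Real.log (πθ a / πθ' a) ≤
      (1 / 2) * (Finset.univ.sup' Finset.univ_nonempty
        (fun a => |θ a - θ' a - c|)) ^ 2 := by
  intro πθ πθ'
  set δ : α → ℝ := fun a => θ a - θ' a - c with hδdef
  set M : ℝ := Finset.univ.sup' Finset.univ_nonempty (fun a => |θ a - θ' a - c|) with hMdef
  have hM : ∀ a, |δ a| ≤ M := fun a => hMdef ▸ Finset.le_sup' (fun a => |θ a - θ' a - c|) (Finset.mem_univ a)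
  set Z : ℝ := ∑ a, Real.exp (θ a) with hZdef
  set Z' : ℝ := ∑ a, Real.exp (θ' a) with hZ'def
  have hZpos : 0 < Z := Finset.sum_pos (fun a _ => Real.exp_pos _) Finset.univ_nonempty
  have hZ'pos : 0 < Z' := Finset.sum_pos (fun a _ => Real.exp_pos _) Finset.univ_nonempty
  -- rewrite each log term
  have hlog : ∀ a, Real.log (πθ a / πθ' a) = δ a + (c + Real.log Z' - Real.log Z) := by
    intro a
    show Real.log ((Real.exp (θ a) / Z) / (Real.exp (θ' a) / Z')) = _
    rw [Real.log_div (by positivity) (by positivity),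
      Real.log_div (Real.exp_ne_zero _) hZpos.ne',
      Real.log_div (Real.exp_ne_zero _) hZ'pos.ne',
      Real.log_exp, Real.log_exp]
    simp [hδdef]
    ring
  have hKL : ∑ a, πθ a * Real.log (πθ a / πθ' a)
      = (∑ a, Real.exp (θ a) * δ a) / Z + (c + Real.log Z' - Real.log Z) := by
    have hsum1 : ∑ a, πθ a = 1 := by
      show ∑ a, Real.exp (θ a) / Z = 1
      rw [← Finset.sum_div, ← hZdef, div_self hZpos.ne']
    calc ∑ a, πθ a * Real.log (πθ a / πθ' a)
        = ∑ a, (πθ a * δ a + πθ a * (c + Real.log Z' - Real.log Z)) := by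
          apply Finset.sum_congr rfl; intro a _; rw [hlog a]; ring
      _ = (∑ a, πθ a * δ a) + (∑ a, πθ a) * (c + Real.log Z' - Real.log Z) := by
          rw [Finset.sum_add_distrib, Finset.sum_mul]
      _ = (∑ a, Real.exp (θ a) * δ a) / Z + (c + Real.log Z' - Real.log Z) := by
          rw [hsum1, one_mul]
          congr 1
          rw [Finset.sum_div]
          apply Finset.sum_congr rfl
          intro a _
          show Real.exp (θ a) / Z * δ a = _
          ring
  have hkey := key_logsum θ δ M hM
  have hS1 : (∑ a, Real.exp (θ a - δ a)) = Real.exp c * Z' := by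
    rw [hZ'def, Finset.mul_sum]
    apply Finset.sum_congr rfl
    intro a _
    rw [← Real.exp_add]
    congr 1
    simp [hδdef]
    ring
  rw [hS1, Real.log_mul (Real.exp_ne_zero _) hZ'pos.ne', Real.log_exp] at hkey
  have hneg : (∑ a, Real.exp (θ a) * (-(δ a))) = -∑ a, Real.exp (θ a) * δ a := by
    rw [← Finset.sum_neg_distrib]
    apply Finset.sum_congr rfl
    intro a _
    ring
  rw [hneg] at hkey
  rw [hKL]
  have : (1 / 2) * M ^ 2 = M ^ 2 / 2 := by ring
  rw [this]
  rw [← hZdef] at hkey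
  have h2 : -(-∑ a, Real.exp (θ a) * δ a) / Z = (∑ a, Real.exp (θ a) * δ a) / Z := by
    ring
  rw [neg_div] at hkey
  linarith
end

section
/- Let π be a strictly positive probability vector on a finite set α, let A : α → ℝ satisfy Σ_a π(a)·A(a) = 0, fix η > 0, and define π'(a) = π(a)·exp(η·A(a)) / Σ_{a'} π(a')·exp(η·A(a')). Then Σ_a π'(a)·A(a) = (1/η)·KL(π' ‖ π) + (1/η)·KL(π ‖ π'). -/
/-- NPG improvement identity:
`∑ π' A = (1/η) KL(π'‖π) + (1/η) KL(π‖π')` for the exponentiated update `π'`. -/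
theorem npg_improvement_identity {α : Type*} [Fintype α] [Nonempty α]
    (π : α → ℝ) (hπ : ∀ a, 0 < π a) (hsum : ∑ a, π a = 1)
    (A : α → ℝ) (hA : ∑ a, π a * A a = 0) (η : ℝ) (hη : 0 < η) :
    let Z : ℝ := ∑ a', π a' * Real.exp (η * A a')
    let π' : α → ℝ := fun a => π a * Real.exp (η * A a) / Z
    ∑ a, π' a * A a =
      (1 / η) * (∑ a, π' a * Real.log (π' a / π a)) +
      (1 / η) * (∑ a, π a * Real.log (π a / π' a)) := by
  intro Z π'
  have hZ : 0 < Z :=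
    Finset.sum_pos (fun a _ => mul_pos (hπ a) (Real.exp_pos _)) Finset.univ_nonempty
  have hπ' : ∀ a, π' a = π a * Real.exp (η * A a) / Z := fun a => rfl
  have hlog1 : ∀ a, Real.log (π' a / π a) = η * A a - Real.log Z := by
    intro a
    have : π' a / π a = Real.exp (η * A a) / Z := by
      rw [hπ' a]; field_simp [(hπ a).ne', hZ.ne']
    rw [this, Real.log_div (Real.exp_ne_zero _) hZ.ne', Real.log_exp]
  have hlog2 : ∀ a, Real.log (π a / π' a) = Real.log Z - η * A a := by
    intro a
    have hπ'pos : 0 < π' a := div_pos (mul_pos (hπ a) (Real.exp_pos _)) hZ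
    have : π a / π' a = (π' a / π a)⁻¹ := by
      rw [inv_div]
    rw [this, Real.log_inv, hlog1 a]; ring
  have hsum' : ∑ a, π' a = 1 := by
    simp only [hπ']
    rw [← Finset.sum_div, div_eq_one_iff_eq hZ.ne']
  have e1 : ∑ a, π' a * Real.log (π' a / π a)
      = η * (∑ a, π' a * A a) - Real.log Z := by
    calc ∑ a, π' a * Real.log (π' a / π a)
        = ∑ a, (η * (π' a * A a) - Real.log Z * π' a) := by
          refine Finset.sum_congr rfl fun a _ => ?_
          rw [hlog1 a]; ring
      _ = η * (∑ a, π' a * A a) - Real.log Z * ∑ a, π' a := by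
          rw [Finset.sum_sub_distrib, Finset.mul_sum, Finset.mul_sum]
      _ = _ := by rw [hsum']; ring
  have e2 : ∑ a, π a * Real.log (π a / π' a) = Real.log Z := by
    calc ∑ a, π a * Real.log (π a / π' a)
        = ∑ a, (Real.log Z * π a - η * (π a * A a)) := by
          refine Finset.sum_congr rfl fun a _ => ?_
          rw [hlog2 a]; ring
      _ = Real.log Z * (∑ a, π a) - η * ∑ a, π a * A a := by
          rw [Finset.sum_sub_distrib, Finset.mul_sum, Finset.mul_sum]
      _ = Real.log Z := by rw [hsum, hA]; ring
  rw [e1, e2]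
  field_simp
  ring
end

section
/- Let π be a strictly positive probability vector on a finite set α, let A : α → ℝ satisfy Σ_a π(a)·A(a) = 0 and max_a A(a) > 0. Let S = {a : A(a) = max_{a'} A(a')}, let w = Σ_{a∈S} π(a), and let Δ = max_a A(a) − max_{a∉S} A(a) (assuming S ≠ α). Fix η > 0 and define π'(a) = π(a)·exp(η·A(a)) / Σ_{a'} π(a')·exp(η·A(a')). Then Σ_a π'(a)·A(a) ≥ (1 − 1/(1 + w·(exp(η·Δ) − 1))) · max_a A(a). -/
set_option maxHeartbeats 1000000 in
/-- NPG improvement lower bound in terms of the probability mass `w` on the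
argmax set and the advantage gap `Δ`. -/
theorem npg_improvement_lower_bound {α : Type*} [Fintype α] [Nonempty α]
    [DecidableEq α]
    (π : α → ℝ) (hπ : ∀ a, 0 < π a) (hsum : ∑ a, π a = 1)
    (A : α → ℝ) (hA : ∑ a, π a * A a = 0)
    (M : ℝ) (hM : M = Finset.univ.sup' Finset.univ_nonempty A) (hMpos : 0 < M)
    (S : Finset α) (hS : S = Finset.univ.filter (fun a => A a = M))
    (hproper : (Finset.univ \ S).Nonempty)
    (w : ℝ) (hw : w = ∑ a ∈ S, π a)
    (Δ : ℝ) (hΔ : Δ = M - (Finset.univ \ S).sup' hproper A)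
    (η : ℝ) (hη : 0 < η) :
    let Z : ℝ := ∑ a', π a' * Real.exp (η * A a')
    ∑ a, (π a * Real.exp (η * A a) / Z) * A a ≥
      (1 - 1 / (1 + w * (Real.exp (η * Δ) - 1))) * M := by
  intro Z
  have hle : ∀ a, A a ≤ M := by
    intro a; rw [hM]; exact Finset.le_sup' A (Finset.mem_univ a)
  have hmemS : ∀ a ∈ S, A a = M := by
    intro a ha; rw [hS] at ha; exact (Finset.mem_filter.mp ha).2
  have hnotS : ∀ a ∈ Finset.univ \ S, A a < M := by
    intro a ha
    have h2 := (Finset.mem_sdiff.mp ha).2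
    rcases lt_or_eq_of_le (hle a) with h | h
    · exact h
    · exact absurd (by rw [hS]; exact Finset.mem_filter.mpr ⟨Finset.mem_univ a, h⟩) h2
  have hSne : S.Nonempty := by
    obtain ⟨a0, -, ha0⟩ := Finset.exists_mem_eq_sup' Finset.univ_nonempty A
    exact ⟨a0, by rw [hS]; exact Finset.mem_filter.mpr ⟨Finset.mem_univ a0, (hM.trans ha0).symm⟩⟩
  have hΔpos : 0 < Δ := by
    obtain ⟨b0, hb0, hb0e⟩ := Finset.exists_mem_eq_sup' hproper A
    have := hnotS b0 hb0
    rw [hΔ, hb0e]; linarith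
  have hAleS : ∀ a ∈ Finset.univ \ S, A a ≤ M - Δ := by
    intro a ha
    have h1 : A a ≤ (Finset.univ \ S).sup' hproper A := Finset.le_sup' A ha
    rw [hΔ]; linarith
  have hw0 : 0 < w := by rw [hw]; exact Finset.sum_pos (fun a _ => hπ a) hSne
  -- sum splits
  have hsplitπ := Finset.sum_sdiff (f := fun a => π a) (Finset.subset_univ S)
  have hsplitA := Finset.sum_sdiff (f := fun a => π a * A a) (Finset.subset_univ S)
  have hsplitZ := Finset.sum_sdiff (f := fun a => π a * Real.exp (η * A a)) (Finset.subset_univ S)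
  have hsplitN := Finset.sum_sdiff (f := fun a => π a * Real.exp (η * A a) * A a)
    (Finset.subset_univ S)
  have hoffπ : ∑ a ∈ Finset.univ \ S, π a = 1 - w := by
    rw [hw] at *; linarith [hsplitπ, hsum]
  have h1w : 0 < 1 - w := by
    rw [← hoffπ]; exact Finset.sum_pos (fun a _ => hπ a) hproper
  have hsum_S_A : ∑ a ∈ S, π a * A a = w * M := by
    rw [hw, Finset.sum_mul]
    exact Finset.sum_congr rfl (fun a ha => by rw [hmemS a ha])
  have hoffA : ∑ a ∈ Finset.univ \ S, π a * A a = -(w * M) := by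
    linarith [hsplitA, hA, hsum_S_A]
  have hsum_S_exp : ∑ a ∈ S, π a * Real.exp (η * A a) = w * Real.exp (η * M) := by
    rw [hw, Finset.sum_mul]
    exact Finset.sum_congr rfl (fun a ha => by rw [hmemS a ha])
  have hsum_S_eA : ∑ a ∈ S, π a * Real.exp (η * A a) * A a
      = w * Real.exp (η * M) * M := by
    rw [hw, Finset.sum_mul, Finset.sum_mul]
    exact Finset.sum_congr rfl (fun a ha => by rw [hmemS a ha])
  set c : ℝ := min 0 (M - Δ) with hc
  set P : ℝ := Real.exp (η * M) with hP
  set Q : ℝ := Real.exp (η * (M - Δ)) with hQ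
  set D : ℝ := Real.exp (η * Δ) with hD
  have hD1 : 1 < D := by
    rw [hD, ← Real.exp_zero]
    exact Real.exp_lt_exp.mpr (by positivity)
  have hc₁ : 0 < 1 + w * (D - 1) := by nlinarith
  have hPQD : P = Q * D := by rw [hP, hQ, hD, ← Real.exp_add]; congr 1; ring
  have hZpos : 0 < Z := Finset.sum_pos (fun a _ => mul_pos (hπ a) (Real.exp_pos _))
    Finset.univ_nonempty
  -- upper bound on Z
  have hoffZ : ∑ a ∈ Finset.univ \ S, π a * Real.exp (η * A a) ≤ (1 - w) * Q := by
    rw [← hoffπ, Finset.sum_mul]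
    apply Finset.sum_le_sum
    intro a ha
    exact mul_le_mul_of_nonneg_left
      (Real.exp_le_exp.mpr (mul_le_mul_of_nonneg_left (hAleS a ha) hη.le)) (hπ a).le
  have hZub : Z ≤ w * P + (1 - w) * Q := by
    have hZeq : Z = ∑ a, π a * Real.exp (η * A a) := rfl
    rw [hZeq]
    linarith [hsplitZ, hsum_S_exp, hoffZ]
  -- lower bound on off-S part of numerator
  have hexp_lb : ∀ a ∈ Finset.univ \ S,
      Real.exp (η * c) * A a ≤ Real.exp (η * A a) * A a := by
    intro a ha
    rcases le_total (A a) 0 with h0 | h0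
    · have h1 : A a ≤ c := le_min h0 (hAleS a ha)
      have h2 : Real.exp (η * A a) ≤ Real.exp (η * c) :=
        Real.exp_le_exp.mpr (mul_le_mul_of_nonneg_left h1 hη.le)
      exact mul_le_mul_of_nonpos_right h2 h0
    · have h1 : c ≤ A a := le_trans (min_le_left _ _) h0
      have h2 : Real.exp (η * c) ≤ Real.exp (η * A a) :=
        Real.exp_le_exp.mpr (mul_le_mul_of_nonneg_left h1 hη.le)
      exact mul_le_mul_of_nonneg_right h2 h0
  have hoff_lb : Real.exp (η * c) * ∑ a ∈ Finset.univ \ S, π a * A a ≤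
      ∑ a ∈ Finset.univ \ S, π a * Real.exp (η * A a) * A a := by
    rw [Finset.mul_sum]
    apply Finset.sum_le_sum
    intro a ha
    calc Real.exp (η * c) * (π a * A a) = π a * (Real.exp (η * c) * A a) := by ring
      _ ≤ π a * (Real.exp (η * A a) * A a) :=
          mul_le_mul_of_nonneg_left (hexp_lb a ha) (hπ a).le
      _ = π a * Real.exp (η * A a) * A a := by ring
  have hNum : w * P * M - Real.exp (η * c) * (w * M)
      ≤ ∑ a, π a * Real.exp (η * A a) * A a := by
    rw [hoffA] at hoff_lb
    linarith [hsplitN, hsum_S_eA, hoff_lb]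
  -- key algebraic inequality
  have key : (D - 1) * (w * P + (1 - w) * Q)
      ≤ (1 + w * (D - 1)) * (P - Real.exp (η * c)) := by
    rcases le_total Δ M with hMD | hMD
    · have hc0 : c = 0 := min_eq_left (by linarith)
      rw [hc0, mul_zero, Real.exp_zero, hPQD]
      have hQ1 : 1 ≤ Q := Real.one_le_exp (mul_nonneg hη.le (by linarith))
      nlinarith [mul_nonneg (mul_nonneg hw0.le (by linarith : (0:ℝ) ≤ D))
          (by linarith : (0:ℝ) ≤ Q - 1),
        mul_nonneg h1w.le (by linarith : (0:ℝ) ≤ Q - 1)]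
    · have hc0 : c = M - Δ := min_eq_right (by linarith)
      rw [hc0, ← hQ]
      exact le_of_eq (by rw [hPQD]; ring)
  -- put things together
  have hgoal_eq : ∑ a, (π a * Real.exp (η * A a) / Z) * A a
      = (∑ a, π a * Real.exp (η * A a) * A a) / Z := by
    rw [Finset.sum_div]
    exact Finset.sum_congr rfl (fun a _ => by ring)
  rw [ge_iff_le, hgoal_eq, le_div_iff₀ hZpos]
  have hr : 1 - 1 / (1 + w * (D - 1)) = w * (D - 1) / (1 + w * (D - 1)) := by
    field_simp
    ring
  rw [hr]
  have hk : 0 ≤ w * (D - 1) / (1 + w * (D - 1)) * M :=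
    mul_nonneg (div_nonneg (by nlinarith) hc₁.le) hMpos.le
  have hstep2 : w * (D - 1) / (1 + w * (D - 1)) * M * (w * P + (1 - w) * Q)
      ≤ w * P * M - Real.exp (η * c) * (w * M) := by
    rw [div_mul_eq_mul_div, div_mul_eq_mul_div, div_le_iff₀ hc₁]
    linarith [mul_le_mul_of_nonneg_left key (mul_nonneg hw0.le hMpos.le)]
  calc w * (D - 1) / (1 + w * (D - 1)) * M * Z
      ≤ w * (D - 1) / (1 + w * (D - 1)) * M * (w * P + (1 - w) * Q) :=
        mul_le_mul_of_nonneg_left hZub hk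
    _ ≤ w * P * M - Real.exp (η * c) * (w * M) := hstep2
    _ ≤ ∑ a, π a * Real.exp (η * A a) * A a := hNum
end

section
/- Let (V_k) be a sequence in ℝ^S (S a finite set) and V* ∈ ℝ^S with V_k ≤ V* componentwise for all k. Suppose T : ℝ^S → ℝ^S is monotone (U ≤ W implies TU ≤ TW), is a γ-contraction in the sup norm with γ ∈ (0,1), has fixed point V* (TV* = V*), and satisfies TV ≥ V whenever V ≤ V*. If for each k there is C_k ∈ (0,1) and a monotone operator T_{k+1} with T_{k+1}V_{k+1} = V_{k+1}, T_{k+1}V_k ≥ V_k, V_{k+1} ≥ V_k, and T_{k+1}V_k − V_k ≥ C_k·(TV_k − V_k) componentwise, then ‖V* − V_{k+1}‖_∞ ≤ (1 − (1−γ)·C_k)·‖V* − V_k‖_∞ for all k. -/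
/-- Abstract linear convergence in sup norm via Bellman-type operators. -/
theorem linear_convergence_sup_norm {S : Type*} [Fintype S] [Nonempty S]
    (γ : ℝ) (hγ0 : 0 < γ) (hγ1 : γ < 1)
    (T : (S → ℝ) → (S → ℝ))
    (hTmono : ∀ U W : S → ℝ, U ≤ W → T U ≤ T W)
    (hTcontr : ∀ U W : S → ℝ, ‖T U - T W‖ ≤ γ * ‖U - W‖)
    (Vstar : S → ℝ) (hfix : T Vstar = Vstar)
    (hTimp : ∀ V : S → ℝ, V ≤ Vstar → V ≤ T V)
    (V : ℕ → S → ℝ) (hVle : ∀ k, V k ≤ Vstar)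
    (C : ℕ → ℝ) (hC0 : ∀ k, 0 < C k) (hC1 : ∀ k, C k < 1)
    (Tk : ℕ → (S → ℝ) → (S → ℝ))
    (hTkmono : ∀ k, ∀ U W : S → ℝ, U ≤ W → Tk k U ≤ Tk k W)
    (hTkfix : ∀ k, Tk (k + 1) (V (k + 1)) = V (k + 1))
    (hTkimp : ∀ k, V k ≤ Tk (k + 1) (V k))
    (hVmono : ∀ k, V k ≤ V (k + 1))
    (hgap : ∀ k, ∀ s : S, C k * (T (V k) s - V k s) ≤ Tk (k + 1) (V k) s - V k s) :
    ∀ k, ‖Vstar - V (k + 1)‖ ≤ (1 - (1 - γ) * C k) * ‖Vstar - V k‖ := by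
  intro k
  set M := ‖Vstar - V k‖ with hM
  have hM0 : 0 ≤ M := norm_nonneg _
  have hcoef : 0 ≤ 1 - (1 - γ) * C k := by nlinarith [hC0 k, hC1 k]
  have key : ∀ s, ‖(Vstar - V (k + 1)) s‖ ≤ (1 - (1 - γ) * C k) * M := by
    intro s
    have h1 : (1 - C k) * V k s + C k * T (V k) s ≤ V (k + 1) s := by
      have hTk : Tk (k + 1) (V k) s ≤ V (k + 1) s := by
        have h := hTkmono (k + 1) (V k) (V (k + 1)) (hVmono k) s
        rwa [hTkfix k] at h
      have hg := hgap k s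
      nlinarith
    have h2 : Vstar s - V k s ≤ M := by
      calc Vstar s - V k s ≤ |Vstar s - V k s| := le_abs_self _
        _ ≤ M := by
          simpa [Real.norm_eq_abs] using norm_le_pi_norm (Vstar - V k) s
    have h3 : T Vstar s - T (V k) s ≤ γ * M := by
      calc T Vstar s - T (V k) s ≤ |T Vstar s - T (V k) s| := le_abs_self _
        _ ≤ ‖T Vstar - T (V k)‖ := by
          simpa [Real.norm_eq_abs] using norm_le_pi_norm (T Vstar - T (V k)) s
        _ ≤ γ * M := hTcontr Vstar (V k)
    have h0 : 0 ≤ Vstar s - V (k + 1) s := by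
      have := hVle (k + 1) s; linarith
    have hfs : T Vstar s = Vstar s := by rw [hfix]
    have hub : Vstar s - V (k + 1) s ≤ (1 - (1 - γ) * C k) * M := by
      nlinarith [hC0 k, hC1 k]
    simp only [Pi.sub_apply, Real.norm_eq_abs]
    rw [abs_of_nonneg h0]
    exact hub
  calc ‖Vstar - V (k + 1)‖ ≤ (1 - (1 - γ) * C k) * M :=
        pi_norm_le_iff_of_nonneg (mul_nonneg hcoef hM0) |>.mpr key
    _ = (1 - (1 - γ) * C k) * ‖Vstar - V k‖ := rfl
end
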